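/- arXiv:1503.01575 — 5 statements merged into one kernel-verified Lean document; each statement's English description precedes it below -/
import Mathlib

section
/- Let H be an n×n Hermitian matrix with distinct eigenvalues τ_1 < ⋯ < τ_s and corresponding main angles β_1, …, β_s, let a be a complex number, let J be the n×n all-ones matrix, and set M = H + aJ. Then for every complex number x which is not an eigenvalue of H, the characteristic polynomials P_M(x) = det(xI − M) and P_H(x) = det(xI − H) satisfy P_M(x) = P_H(x)·(1 + a·Σ_{i=1}^s n β_i²/(τ_i − x)). -/
open Matrix
open scoped Classical

noncomputable def eigSp {V : Type*} [Fintype V] [DecidableEq V]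
    (H : Matrix V V ℂ) (μ : ℝ) : Submodule ℂ (EuclideanSpace ℂ V) :=
  LinearMap.ker (Matrix.toEuclideanLin H - (μ : ℂ) • LinearMap.id)

noncomputable def mainAngle {V : Type*} [Fintype V] [DecidableEq V]
    (H : Matrix V V ℂ) (μ : ℝ) : ℝ :=
  (1 / Real.sqrt (Fintype.card V)) *
    ‖((eigSp H μ).orthogonalProjectionOnto (WithLp.toLp 2 (fun _ => 1)) : EuclideanSpace ℂ V)‖

noncomputable def eigMult {V : Type*} [Fintype V] [DecidableEq V]
    (H : Matrix V V ℂ) (μ : ℝ) : ℕ :=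
  Module.finrank ℂ (eigSp H μ)

/-- `A` is the adjacency matrix of a tournament: a (0,1)-matrix with `A + Aᵀ = J - I`. -/
def IsTournament {V : Type*} [Fintype V] [DecidableEq V] (A : Matrix V V ℂ) : Prop :=
  (∀ i j, A i j = 0 ∨ A i j = 1) ∧
    A + Aᵀ = Matrix.of (fun _ _ => (1 : ℂ)) - 1

/-- `φ` is a representation of the tournament with adjacency matrix `A` in `Ω(d)`,
with angle `α` (Im α > 0). -/
def IsRepresentation {n d : ℕ} (A : Matrix (Fin n) (Fin n) ℂ) (α : ℂ)
    (φ : Fin n → EuclideanSpace ℂ (Fin d)) : Prop :=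
  0 < α.im ∧ (∀ x, ‖φ x‖ = 1) ∧
    ∀ x y : Fin n, x ≠ y →
      (A x y = 1 → (inner ℂ (φ x) (φ y) : ℂ) = α) ∧
      (A y x = 1 → (inner ℂ (φ x) (φ y) : ℂ) = (starRingEnd ℂ) α)

def Representable {n : ℕ} (A : Matrix (Fin n) (Fin n) ℂ) (d : ℕ) : Prop :=
  ∃ (α : ℂ) (φ : Fin n → EuclideanSpace ℂ (Fin d)), IsRepresentation A α φ

noncomputable def RepDim {n : ℕ} (A : Matrix (Fin n) (Fin n) ℂ) : ℕ :=
  sInf {d | Representable A d}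

/-- doubly regular tournament -/
def IsDoublyRegular {V : Type*} [Fintype V] [DecidableEq V] (A : Matrix V V ℂ) : Prop :=
  IsTournament A ∧
    A *ᵥ (fun _ => 1) = (fun _ => ((Fintype.card V : ℂ) - 1) / 2) ∧
    A * Aᵀ = (((Fintype.card V : ℂ) + 1) / 4) • 1 +
      (((Fintype.card V : ℂ) - 3) / 4) • Matrix.of (fun _ _ => (1 : ℂ))

/-- skew Hadamard matrix -/
def IsSkewHadamard {V : Type*} [Fintype V] [DecidableEq V] (H : Matrix V V ℂ) : Prop :=
  (∀ i j, H i j = 1 ∨ H i j = -1) ∧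
    H + Hᵀ = (2 : ℂ) • 1 ∧ H * Hᵀ = (Fintype.card V : ℂ) • 1

/-- 2-code -/
def IsTwoCode {d : ℕ} (X : Finset (EuclideanSpace ℂ (Fin d))) (α : ℂ) : Prop :=
  α.im ≠ 0 ∧ (∀ x ∈ X, ‖x‖ = 1) ∧
    {z : ℂ | ∃ x ∈ X, ∃ y ∈ X, x ≠ y ∧ (inner ℂ x y : ℂ) = z} = {α, (starRingEnd ℂ) α}

/-- adjacency matrix of a 2-code -/
noncomputable def codeAdj {d : ℕ} (X : Finset (EuclideanSpace ℂ (Fin d))) (α : ℂ) :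
    Matrix {x // x ∈ X} {x // x ∈ X} ℂ :=
  Matrix.of fun x y =>
    if (x : EuclideanSpace ℂ (Fin d)) ≠ (y : EuclideanSpace ℂ (Fin d)) ∧
        (inner ℂ (x : EuclideanSpace ℂ (Fin d)) (y : EuclideanSpace ℂ (Fin d)) : ℂ) = α
    then 1 else 0

/-!
Put `B = x • 1 - H`. Since `J` has rank one, the matrix determinant lemma gives
`det (x • 1 - M) = det (B - a • J) = det B * (1 - a * 𝟙ᵀ B⁻¹ 𝟙)`. The vector `𝟙` is the sum of its
orthogonal projections `Eᵢ 𝟙` onto the eigenspaces of `H`, on which `B⁻¹` acts as `(x - τᵢ)⁻¹`,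
so `𝟙ᵀ B⁻¹ 𝟙 = ∑ ‖Eᵢ 𝟙‖² / (x - τᵢ)`, and `‖Eᵢ 𝟙‖² = n βᵢ²`.
-/

theorem Matrix.det_sub_smul_allOnes {α V : Type*} [CommRing α] [Fintype V] [DecidableEq V]
    {B : Matrix V V α} (hB : IsUnit B.det) (a : α) :
    (B - a • of fun _ _ => (1 : α)).det =
      B.det * (1 - a * ((fun _ => 1) ⬝ᵥ B⁻¹ *ᵥ fun _ => 1)) := by
  have hJ : B - a • of (fun _ _ => (1 : α)) =
      B + replicateCol Unit (fun _ : V => (1 : α)) *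
        replicateRow Unit ((-a) • fun _ : V => (1 : α)) := by
    ext i j
    simp [sub_eq_add_neg, Matrix.mul_apply]
  rw [hJ, det_add_replicateCol_mul_replicateRow hB, det_unique (1 + _), add_apply, one_apply_eq,
    Matrix.mul_assoc, ← replicateCol_mulVec, replicateRow_mul_replicateCol_apply, smul_dotProduct,
    smul_eq_mul, neg_mul, ← sub_eq_add_neg]

theorem Submodule.inner_starProjection_self {𝕜 E : Type*} [RCLike 𝕜] [NormedAddCommGroup E]
    [InnerProductSpace 𝕜 E] (K : Submodule 𝕜 E) [K.HasOrthogonalProjection] (v : E) :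
    inner 𝕜 v (K.starProjection v) = (‖K.starProjection v‖ ^ 2 : 𝕜) :=
  calc inner 𝕜 v (K.starProjection v)
      = inner 𝕜 v (K.starProjection (K.starProjection v)) := by
        rw [K.starProjection_eq_self_iff.mpr (K.starProjection_apply_mem v)]
    _ = inner 𝕜 (K.starProjection v) (K.starProjection v) :=
        (K.inner_starProjection_left_eq_right v _).symm
    _ = _ := inner_self_eq_norm_sq_to_K _

section

variable {V : Type*} [Fintype V]

theorem ones_dotProduct_eq_inner (w : EuclideanSpace ℂ V) :
    (fun _ => 1) ⬝ᵥ w.ofLp = inner ℂ (WithLp.toLp 2 fun _ => (1 : ℂ)) w := by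
  simp [EuclideanSpace.inner_eq_star_dotProduct, dotProduct_comm, Pi.star_def]

variable [DecidableEq V]

theorem card_mul_mainAngle_sq (H : Matrix V V ℂ) (μ : ℝ) :
    (Fintype.card V : ℝ) * mainAngle H μ ^ 2 =
      ‖(eigSp H μ).starProjection (WithLp.toLp 2 fun _ => 1)‖ ^ 2 := by
  rcases isEmpty_or_nonempty V with hV | hV
  · simp [Subsingleton.elim ((eigSp H μ).starProjection (WithLp.toLp 2 fun _ => 1)) 0]
  have hcard : (0 : ℝ) < Fintype.card V := by exact_mod_cast Fintype.card_pos
  rw [mainAngle, ← Submodule.starProjection_apply, mul_pow, div_pow, Real.sq_sqrt hcard.le]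
  field_simp

theorem eigSp_eq_eigenspace (H : Matrix V V ℂ) (μ : ℝ) :
    eigSp H μ = Module.End.eigenspace (toEuclideanLin H) μ := by
  rw [Module.End.eigenspace_def, eigSp]
  rfl

theorem mulVec_eq_smul_of_mem_eigSp {H : Matrix V V ℂ} {μ : ℝ} {v : EuclideanSpace ℂ V}
    (hv : v ∈ eigSp H μ) : H *ᵥ v.ofLp = (μ : ℂ) • v.ofLp := by
  rw [eigSp_eq_eigenspace, Module.End.mem_eigenspace_iff] at hv
  exact congrArg WithLp.ofLp hv

theorem isUnit_det_smul_one_sub_of_notMem_spectrum {H : Matrix V V ℂ} {x : ℂ}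
    (hx : x ∉ spectrum ℂ H) :
    IsUnit (x • 1 - H).det := by
  rw [← isUnit_iff_isUnit_det, ← Algebra.algebraMap_eq_smul_one]
  exact spectrum.notMem_iff.mp hx

/-- For `x = μ` both sides vanish: `x` is then not an eigenvalue, so `v = 0`. -/
theorem inv_mulVec_of_mem_eigSp {H : Matrix V V ℂ} {x : ℂ} (hx : x ∉ spectrum ℂ H) {μ : ℝ}
    {v : EuclideanSpace ℂ V} (hv : v ∈ eigSp H μ) :
    (x • 1 - H)⁻¹ *ᵥ v.ofLp = (x - μ)⁻¹ • v.ofLp := by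
  have hBv : (x - μ) • ((x • 1 - H)⁻¹ *ᵥ v.ofLp) = v.ofLp := by
    have hmul : (x • 1 - H) *ᵥ v.ofLp = (x - μ) • v.ofLp := by
      rw [sub_mulVec, smul_mulVec, one_mulVec, mulVec_eq_smul_of_mem_eigSp hv, sub_smul]
    rw [← mulVec_smul, ← hmul, mulVec_mulVec,
      nonsing_inv_mul _ (isUnit_det_smul_one_sub_of_notMem_spectrum hx), one_mulVec]
  rcases eq_or_ne (x - μ) 0 with h0 | h0
  · have hv0 : v.ofLp = 0 := by rw [← hBv, h0, zero_smul]
    simp [hv0]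
  · exact (eq_inv_smul_iff₀ h0).mpr hBv

section Spectral

variable {ι : Type*} {H : Matrix V V ℂ} {τ : ι → ℝ}

theorem eigenspace_le_iSup_eigSp (hH : H.IsHermitian)
    (hcover : ∀ μ : ℝ, eigSp H μ ≠ ⊥ → ∃ i, τ i = μ) (μ : ℂ) :
    Module.End.eigenspace (toEuclideanLin H) μ ≤ ⨆ i, eigSp H (τ i) := by
  rcases eq_or_ne (Module.End.eigenspace (toEuclideanLin H) μ) ⊥ with hbot | hne
  · exact hbot ▸ bot_le
  have hreal : ((μ.re : ℝ) : ℂ) = μ := Complex.conj_eq_iff_re.mp <|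
    (isSymmetric_toEuclideanLin_iff.mpr hH).conj_eigenvalue_eq_self
      (Module.End.hasEigenvalue_iff.mpr hne)
  obtain ⟨i, hi⟩ := hcover μ.re (by rwa [eigSp_eq_eigenspace, hreal])
  rw [← hreal, ← eigSp_eq_eigenspace, ← hi]
  exact le_iSup (fun i => eigSp H (τ i)) i

variable [Fintype ι]

theorem sum_starProjection_eigSp (hH : H.IsHermitian)
    (hcover : ∀ μ : ℝ, eigSp H μ ≠ ⊥ → ∃ i, τ i = μ) (hτ : Function.Injective τ)
    (v : EuclideanSpace ℂ V) :
    ∑ i, (eigSp H (τ i)).starProjection v = v := by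
  have hT := isSymmetric_toEuclideanLin_iff.mpr hH
  have horth : OrthogonalFamily ℂ (fun i => eigSp H (τ i))
      fun i => (eigSp H (τ i)).subtypeₗᵢ := by
    refine orthogonalFamily_iff_pairwise.mpr fun i j hij => ?_
    simpa only [Function.onFun, Function.comp_apply, eigSp_eq_eigenspace] using
      orthogonalFamily_iff_pairwise.mp hT.orthogonalFamily_eigenspaces
        ((Complex.ofReal_injective.comp hτ).ne hij)
  have htop : ⨆ μ, Module.End.eigenspace (toEuclideanLin H) μ = ⊤ :=
    Submodule.orthogonal_eq_bot_iff.mp hT.orthogonalComplement_iSup_eigenspaces_eq_bot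
  refine horth.sum_projection_of_mem_iSup v ?_
  exact (top_le_iff.mpr htop).trans (iSup_le (eigenspace_le_iSup_eigSp hH hcover)) trivial

theorem ones_dotProduct_inv_mulVec_ones (hH : H.IsHermitian)
    (hcover : ∀ μ : ℝ, eigSp H μ ≠ ⊥ → ∃ i, τ i = μ) (hτ : Function.Injective τ) {x : ℂ}
    (hx : x ∉ spectrum ℂ H) :
    (fun _ => 1) ⬝ᵥ (x • 1 - H)⁻¹ *ᵥ (fun _ => 1) =
      ∑ i, ((‖(eigSp H (τ i)).starProjection (WithLp.toLp 2 fun _ => 1)‖ ^ 2 : ℝ) : ℂ) /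
        (x - τ i) := by
  set one : EuclideanSpace ℂ V := WithLp.toLp 2 fun _ => 1
  have hsum : (fun _ => 1) = ∑ i, ((eigSp H (τ i)).starProjection one).ofLp := by
    rw [← WithLp.ofLp_sum, sum_starProjection_eigSp hH hcover hτ]
  rw [hsum, mulVec_sum, dotProduct_sum]
  refine Finset.sum_congr rfl fun i _ => ?_
  rw [inv_mulVec_of_mem_eigSp hx ((eigSp H (τ i)).starProjection_apply_mem one), dotProduct_smul,
    ← hsum, ones_dotProduct_eq_inner, Submodule.inner_starProjection_self, smul_eq_mul,
    inv_mul_eq_div]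
  push_cast
  rfl

end Spectral

end

/-- For a Hermitian `H` with distinct eigenvalues `τ 0 < ⋯ < τ (s-1)` and
main angles `β i = mainAngle H (τ i)`, and `M = H + a J`, the characteristic polynomials
satisfy `P_M(x) = P_H(x) · (1 + a ∑ i, n βᵢ² / (τᵢ − x))` for `x` not an eigenvalue of `H`. -/
theorem charpoly_shift_allOnes {n s : ℕ} (H : Matrix (Fin n) (Fin n) ℂ)
    (hH : H.IsHermitian) (τ : Fin s → ℝ) (hτ : StrictMono τ)
    (heig : ∀ μ : ℝ, eigSp H μ ≠ ⊥ ↔ ∃ i, τ i = μ)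
    (a : ℂ) (M : Matrix (Fin n) (Fin n) ℂ)
    (hM : M = H + a • Matrix.of (fun _ _ => (1 : ℂ)))
    (x : ℂ) (hx : x ∉ spectrum ℂ H) :
    Matrix.det (x • (1 : Matrix (Fin n) (Fin n) ℂ) - M) =
      Matrix.det (x • (1 : Matrix (Fin n) (Fin n) ℂ) - H) *
        (1 + a * ∑ i : Fin s,
          ((n : ℂ) * ((mainAngle H (τ i) : ℝ) : ℂ) ^ 2) / (((τ i : ℝ) : ℂ) - x)) := by
  rw [hM, ← sub_sub, det_sub_smul_allOnes (isUnit_det_smul_one_sub_of_notMem_spectrum hx),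
    ones_dotProduct_inv_mulVec_ones hH (fun μ => (heig μ).mp) hτ.injective hx]
  congr 1
  rw [sub_eq_add_neg, ← mul_neg, ← Finset.sum_neg_distrib]
  congr 3 with i
  rw [← card_mul_mainAngle_sq, Fintype.card_fin, ← neg_sub x, div_neg]
  push_cast
  ring
end

section
/- Let G be a tournament on n ≥ 2 vertices with adjacency matrix A and Seidel matrix S = i(A − Aᵀ), whose distinct eigenvalues are τ_1 < ⋯ < τ_s with multiplicities m_i and main angles β_i. If β_1 ≠ 0 and m_1 > 1, then Rep(G) = n − m_1, and G admits a representation in Ω(n − m_1) with angle α = −i/τ_1. -/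
open Matrix
open scoped Classical

/-!
Write `α = a + b i` and `J` for the all-ones matrix. The Gram matrix of a representation with
angle `α` is `G = (1 - a) I + a J + b S`: positive semidefinite, of rank at most the dimension.

Upper bound: with `τ₁ < 0` (the trace of `S` vanishes and `S ≠ 0`), the angle `α = -i/τ₁` gives
`G = I - S/τ₁`, which is positive semidefinite of rank `n - m₁` by the spectral theorem, hence a
Gram matrix in `ℂ^(n - m₁)`.

Lower bound: on `j^⊥` the matrix `G` acts as `(1 - a) I + b S`, so `ker G ∩ j^⊥` lies in the
eigenspace of `S` for `μ = -(1 - a)/b`. Since `m₁ > 1`, the `τ₁`-eigenspace meets `j^⊥` in a nonzero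
vector, on which `G ≥ 0` forces `μ ≤ τ₁`. Thus `ker G ∩ j^⊥` is `0` or lies in the `τ₁`-eigenspace
intersected with `j^⊥`, which has dimension `m₁ - 1` because `τ₁` is main. Hence
`dim ker G ≤ m₁` and `rank G ≥ n - m₁`.
-/

open scoped ComplexOrder

theorem finrank_le_finrank_inf_orthogonal_add_one {𝕜 E : Type*} [RCLike 𝕜] [NormedAddCommGroup E]
    [InnerProductSpace 𝕜 E] [FiniteDimensional 𝕜 E] (K : Submodule 𝕜 E) (v : E) :
    Module.finrank 𝕜 K ≤ Module.finrank 𝕜 (K ⊓ (𝕜 ∙ v)ᗮ : Submodule 𝕜 E) + 1 := by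
  have hsup := Submodule.finrank_sup_add_finrank_inf_eq K (𝕜 ∙ v)ᗮ
  have horth := Submodule.finrank_add_finrank_orthogonal (𝕜 ∙ v)
  have hspan : Module.finrank 𝕜 (𝕜 ∙ v) ≤ 1 := by
    simpa using finrank_span_le_card ({v} : Set E)
  have hle := Submodule.finrank_le (K ⊔ (𝕜 ∙ v)ᗮ)
  omega

section Spectral

variable {V : Type*} [Fintype V] [DecidableEq V]

theorem rank_add_finrank_ker_toEuclideanLin (M : Matrix V V ℂ) :
    M.rank + Module.finrank ℂ (LinearMap.ker (toEuclideanLin M)) = Fintype.card V := by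
  rw [rank_eq_finrank_range_toLin M (PiLp.basisFun 2 ℂ V) (PiLp.basisFun 2 ℂ V),
    ← toLpLin_eq_toLin, LinearMap.finrank_range_add_finrank_ker, finrank_euclideanSpace]

theorem rank_conjStarAlgAut (U : unitaryGroup V ℂ) (M : Matrix V V ℂ) :
    (Unitary.conjStarAlgAut ℂ _ U M).rank = M.rank := by
  rw [Unitary.conjStarAlgAut_apply, ← Unitary.coe_star,
    rank_mul_eq_left_of_isUnit_det _ _ (UnitaryGroup.det_isUnit (star U)),
    rank_mul_eq_right_of_isUnit_det _ _ (UnitaryGroup.det_isUnit U)]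

omit [DecidableEq V] in
theorem rank_gram_le {d : ℕ} (φ : V → EuclideanSpace ℂ (Fin d)) : (gram ℂ φ).rank ≤ d := by
  rw [gram_eq_conjTranspose_mul (EuclideanSpace.basisFun (Fin d) ℂ)]
  exact (rank_mul_le_right _ _).trans ((rank_le_card_height _).trans (Fintype.card_fin d).le)

theorem exists_gram_eq_conjStarAlgAut_diagonal (U : unitaryGroup V ℂ) {δ : V → ℝ}
    (hδ : ∀ i, 0 ≤ δ i) {r : ℕ} (hr : Fintype.card {i // δ i ≠ 0} = r) :
    ∃ φ : V → EuclideanSpace ℂ (Fin r),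
      gram ℂ φ = Unitary.conjStarAlgAut ℂ _ U (diagonal fun i => (δ i : ℂ)) := by
  let e := Fintype.equivFinOfCardEq hr
  refine ⟨fun x => LinearIsometryEquiv.piLpCongrLeft 2 ℂ ℂ e
    (WithLp.toLp 2 fun k : {i // δ i ≠ 0} => (√(δ k) : ℂ) * star (U x k)), ?_⟩
  ext x y
  rw [gram_apply, LinearIsometryEquiv.inner_map_map, PiLp.inner_apply,
    Unitary.conjStarAlgAut_apply]
  simp only [mul_apply, diagonal_apply, mul_ite, mul_zero, Finset.sum_ite_eq', Finset.mem_univ,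
    if_true]
  have hterm : ∀ k : {i // δ i ≠ 0},
      inner ℂ ((√(δ k) : ℂ) * star (U x k)) ((√(δ k) : ℂ) * star (U y k)) =
        U x k * δ k * star (U : Matrix V V ℂ) k y := by
    intro k
    rw [RCLike.inner_apply, star_apply]
    simp only [map_mul, Complex.conj_ofReal, RCLike.star_def, RingHomCompTriple.comp_apply,
      RingHom.id_apply]
    have hsqrt : (√(δ k) : ℂ) * √(δ k) = δ k := by exact_mod_cast Real.mul_self_sqrt (hδ k)
    linear_combination (U x k * starRingEnd ℂ (U y k)) * hsqrt
  rw [Fintype.sum_congr _ _ hterm, ← Finset.sum_subtype (Finset.univ.filter (δ · ≠ 0)) (by simp)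
    fun k => U x k * δ k * star (U : Matrix V V ℂ) k y]
  exact Finset.sum_filter_of_ne fun k _ h hk => h (by simp [hk])

theorem mem_eigSp {H : Matrix V V ℂ} {μ : ℝ} {v : EuclideanSpace ℂ V} :
    v ∈ eigSp H μ ↔ toEuclideanLin H v = (μ : ℂ) • v := by
  simp [eigSp, sub_eq_zero]

theorem eigSp_eq_ker_smul_one_add_smul (H : Matrix V V ℂ) {a b μ : ℝ} (hb : b ≠ 0)
    (h : a + b * μ = 0) :
    eigSp H μ = LinearMap.ker (toEuclideanLin ((a : ℂ) • 1 + (b : ℂ) • H)) := by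
  have ha : (a : ℂ) = -b * μ := by
    rw [eq_neg_of_add_eq_zero_left h]
    push_cast
    ring
  have hb' : (b : ℂ) ≠ 0 := by exact_mod_cast hb
  ext v
  rw [mem_eigSp, LinearMap.mem_ker, map_add, map_smul, map_smul, toLpLin_one,
    LinearMap.add_apply, LinearMap.smul_apply, LinearMap.smul_apply, LinearMap.id_apply, ha]
  constructor
  · intro hv
    rw [hv]
    module
  · intro hv
    apply smul_right_injective _ hb'
    linear_combination (norm := module) hv

namespace Matrix.IsHermitian

variable {H : Matrix V V ℂ}

theorem smul_one_add_smul_eq (hH : H.IsHermitian) (a b : ℝ) :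
    (a : ℂ) • (1 : Matrix V V ℂ) + (b : ℂ) • H =
      Unitary.conjStarAlgAut ℂ _ hH.eigenvectorUnitary
        (diagonal fun i => ((a + b * hH.eigenvalues i : ℝ) : ℂ)) := by
  conv_lhs => rw [hH.spectral_theorem]
  rw [← map_one (Unitary.conjStarAlgAut ℂ _ hH.eigenvectorUnitary), ← map_smul, ← map_smul,
    ← map_add]
  congr 1
  ext i j
  by_cases h : i = j <;> simp [h]

theorem card_ne_zero_add_finrank_eigSp (hH : H.IsHermitian) {a b μ : ℝ} (hb : b ≠ 0)
    (h : a + b * μ = 0) :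
    Fintype.card {i // a + b * hH.eigenvalues i ≠ 0} + Module.finrank ℂ (eigSp H μ) =
      Fintype.card V := by
  have hrank : ((a : ℂ) • (1 : Matrix V V ℂ) + (b : ℂ) • H).rank =
      Fintype.card {i // a + b * hH.eigenvalues i ≠ 0} := by
    rw [hH.smul_one_add_smul_eq, rank_conjStarAlgAut, rank_diagonal]
    simp only [ne_eq, Complex.ofReal_eq_zero]
  rw [← hrank, eigSp_eq_ker_smul_one_add_smul H hb h]
  exact rank_add_finrank_ker_toEuclideanLin _

theorem eigSp_eigenvalues_ne_bot (hH : H.IsHermitian) (i : V) :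
    eigSp H (hH.eigenvalues i) ≠ ⊥ := by
  refine (Submodule.ne_bot_iff _).mpr ⟨hH.eigenvectorBasis i, mem_eigSp.mpr ?_,
    hH.eigenvectorBasis.orthonormal.ne_zero i⟩
  ext x
  simpa using congrFun (hH.mulVec_eigenvectorBasis i) x

theorem exists_eigenvalues_neg (hH : H.IsHermitian) (htr : H.trace = 0) (hne : H ≠ 0) :
    ∃ i, hH.eigenvalues i < 0 := by
  by_contra! hnn
  have hsum : ∑ i, hH.eigenvalues i = 0 := by
    simpa using congrArg Complex.re (hH.trace_eq_sum_eigenvalues.symm.trans htr)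
  refine hne (hH.eigenvalues_eq_zero_iff.mp (funext fun i => ?_))
  exact (Finset.sum_eq_zero_iff_of_nonneg fun i _ => hnn i).mp hsum i (Finset.mem_univ i)

end Matrix.IsHermitian

def allOnes (V : Type*) : EuclideanSpace ℂ V := WithLp.toLp 2 fun _ => 1

omit [DecidableEq V] in
theorem mem_orthogonal_allOnes_iff {v : EuclideanSpace ℂ V} :
    v ∈ (ℂ ∙ allOnes V)ᗮ ↔ ∑ x, v x = 0 := by
  rw [Submodule.mem_orthogonal_singleton_iff_inner_right, EuclideanSpace.inner_eq_star_dotProduct]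
  simp [allOnes, dotProduct]

theorem not_le_orthogonal_allOnes_of_mainAngle_ne_zero {H : Matrix V V ℂ} {μ : ℝ}
    (h : mainAngle H μ ≠ 0) : ¬ eigSp H μ ≤ (ℂ ∙ allOnes V)ᗮ := by
  intro hle
  have hperp : allOnes V ∈ (eigSp H μ)ᗮ := Submodule.orthogonal_le hle
    (Submodule.le_orthogonal_orthogonal _ (Submodule.mem_span_singleton_self _))
  apply h
  rw [mainAngle, ← allOnes, Submodule.orthogonalProjectionOnto_eq_zero_iff.mpr hperp]
  simp

end Spectral

section RepGram

variable {V : Type*} [Fintype V] [DecidableEq V]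

def repGram (S : Matrix V V ℂ) (α : ℂ) : Matrix V V ℂ :=
  ((1 - α.re : ℝ) : ℂ) • 1 + (α.re : ℂ) • of (fun _ _ => 1) + (α.im : ℂ) • S

omit [Fintype V] in
theorem repGram_neg_I_div (S : Matrix V V ℂ) (τ : ℝ) :
    repGram S (-Complex.I / τ) = ((1 : ℝ) : ℂ) • 1 + ((-τ⁻¹ : ℝ) : ℂ) • S := by
  have hre : (-Complex.I / τ).re = 0 := by simp [Complex.div_ofReal_re]
  have him : (-Complex.I / τ).im = -τ⁻¹ := by simp [Complex.div_ofReal_im, neg_div]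
  simp only [repGram, hre, him, sub_zero, Complex.ofReal_zero, zero_smul, add_zero]

theorem toEuclideanLin_repGram_of_sum_eq_zero (S : Matrix V V ℂ) (α : ℂ)
    {v : EuclideanSpace ℂ V} (hv : ∑ x, v x = 0) :
    toEuclideanLin (repGram S α) v =
      ((1 - α.re : ℝ) : ℂ) • v + (α.im : ℂ) • toEuclideanLin S v := by
  have hJ : toEuclideanLin (of fun _ _ => (1 : ℂ) : Matrix V V ℂ) v = 0 := by
    ext x
    simp [toLpLin_apply, mulVec, dotProduct, hv]
  simp only [repGram, map_add, map_smul, LinearMap.add_apply, LinearMap.smul_apply, toLpLin_one,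
    LinearMap.id_apply, hJ, smul_zero, add_zero]

theorem ker_inf_orthogonal_allOnes_le_eigSp (S : Matrix V V ℂ) {α : ℂ} (hα : α.im ≠ 0) :
    LinearMap.ker (toEuclideanLin (repGram S α)) ⊓ (ℂ ∙ allOnes V)ᗮ ≤
      eigSp S (-(1 - α.re) / α.im) := by
  intro v hv
  obtain ⟨hker, hperp⟩ := Submodule.mem_inf.mp hv
  rw [LinearMap.mem_ker,
    toEuclideanLin_repGram_of_sum_eq_zero _ _ (mem_orthogonal_allOnes_iff.mp hperp)] at hker
  have hα' : (α.im : ℂ) ≠ 0 := by exact_mod_cast hα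
  rw [mem_eigSp]
  apply smul_right_injective _ hα'
  dsimp only
  rw [smul_smul]
  push_cast
  rw [mul_div_cancel₀ _ hα']
  linear_combination (norm := module) hker

theorem le_of_posSemidef_repGram {S : Matrix V V ℂ} {α : ℂ} (hpos : (repGram S α).PosSemidef)
    (hα : 0 < α.im) {τ : ℝ} {u : EuclideanSpace ℂ V} (hu : u ∈ eigSp S τ ⊓ (ℂ ∙ allOnes V)ᗮ)
    (hu0 : u ≠ 0) : -(1 - α.re) / α.im ≤ τ := by
  have heig : toEuclideanLin (repGram S α) u = (((1 - α.re) + α.im * τ : ℝ) : ℂ) • u := by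
    rw [toEuclideanLin_repGram_of_sum_eq_zero _ _ (mem_orthogonal_allOnes_iff.mp hu.2),
      mem_eigSp.mp hu.1]
    push_cast
    module
  have hnn : 0 ≤ (1 - α.re) + α.im * τ :=
    eigenvalue_nonneg_of_nonneg (Module.End.hasEigenvalue_of_hasEigenvector
      ⟨Module.End.mem_eigenspace_iff.mpr heig, hu0⟩)
      (isPositive_toEuclideanLin_iff.mpr hpos).re_inner_nonneg_right
  rw [div_le_iff₀ hα]
  linarith

theorem finrank_ker_repGram_le {S : Matrix V V ℂ} {α : ℂ} {τ : ℝ}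
    (hbelow : ∀ μ < τ, eigSp S μ = ⊥) (hmain : ¬ eigSp S τ ≤ (ℂ ∙ allOnes V)ᗮ)
    (hm : 1 < Module.finrank ℂ (eigSp S τ)) (hpos : (repGram S α).PosSemidef) (hα : 0 < α.im) :
    Module.finrank ℂ (LinearMap.ker (toEuclideanLin (repGram S α))) ≤
      Module.finrank ℂ (eigSp S τ) := by
  set K := LinearMap.ker (toEuclideanLin (repGram S α))
  set P := (ℂ ∙ allOnes V)ᗮ
  set W := eigSp S τ
  have hWP : Module.finrank ℂ (W ⊓ P : Submodule ℂ _) < Module.finrank ℂ W :=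
    Submodule.finrank_lt_finrank_of_lt (inf_lt_left.mpr hmain)
  obtain ⟨u, hu, hu0⟩ : ∃ u ∈ W ⊓ P, u ≠ 0 := by
    refine Submodule.exists_mem_ne_zero_of_ne_bot fun h => ?_
    have hW : Module.finrank ℂ W ≤ Module.finrank ℂ (W ⊓ P : Submodule ℂ _) + 1 :=
      finrank_le_finrank_inf_orthogonal_add_one W (allOnes V)
    rw [h, finrank_bot] at hW
    omega
  have hKP : Module.finrank ℂ (K ⊓ P : Submodule ℂ _) ≤
      Module.finrank ℂ (W ⊓ P : Submodule ℂ _) := by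
    have hsub := ker_inf_orthogonal_allOnes_le_eigSp S hα.ne'
    rcases (le_of_posSemidef_repGram hpos hα hu hu0).lt_or_eq with hlt | heq
    · rw [eq_bot_iff.mpr (hsub.trans (hbelow _ hlt).le), finrank_bot]
      exact Nat.zero_le _
    · rw [heq] at hsub
      exact Submodule.finrank_mono (le_inf hsub inf_le_right)
  have hK : Module.finrank ℂ K ≤ Module.finrank ℂ (K ⊓ P : Submodule ℂ _) + 1 :=
    finrank_le_finrank_inf_orthogonal_add_one K (allOnes V)
  omega

theorem Matrix.IsHermitian.exists_gram_eq_repGram {H : Matrix V V ℂ} (hH : H.IsHermitian)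
    {τ : ℝ} (hτ : τ < 0) (hle : ∀ i, τ ≤ hH.eigenvalues i) {r : ℕ}
    (hr : Fintype.card V - Module.finrank ℂ (eigSp H τ) = r) :
    ∃ φ : V → EuclideanSpace ℂ (Fin r), gram ℂ φ = repGram H (-Complex.I / τ) := by
  have hcard := hH.card_ne_zero_add_finrank_eigSp (a := 1) (b := -τ⁻¹) (μ := τ)
    (by simpa using hτ.ne) (by rw [neg_mul, inv_mul_cancel₀ hτ.ne]; ring)
  rw [repGram_neg_I_div, hH.smul_one_add_smul_eq]
  refine exists_gram_eq_conjStarAlgAut_diagonal _ (fun i => ?_) (by omega)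
  have h := mul_le_mul_of_nonneg_left (hle i) (neg_nonneg.mpr (inv_lt_zero.mpr hτ).le)
  rw [neg_mul, inv_mul_cancel₀ hτ.ne] at h
  linarith

end RepGram

section Tournament

variable {V : Type*} [Fintype V] [DecidableEq V]

omit [DecidableEq V] in
theorem trace_seidel (A : Matrix V V ℂ) : (Complex.I • (A - Aᵀ)).trace = 0 := by
  simp [trace_sub]

namespace IsTournament

variable {A : Matrix V V ℂ}

theorem apply_eq_one_or (hA : IsTournament A) {x y : V} (hxy : x ≠ y) :
    (A x y = 1 ∧ A y x = 0) ∨ (A x y = 0 ∧ A y x = 1) := by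
  have h := congrFun (congrFun hA.2 x) y
  simp only [Matrix.add_apply, transpose_apply, Matrix.sub_apply, of_apply, one_apply_ne hxy,
    sub_zero] at h
  rcases hA.1 x y with hxy | hxy <;> rcases hA.1 y x with hyx | hyx <;> simp_all

theorem isHermitian_seidel (hA : IsTournament A) : (Complex.I • (A - Aᵀ)).IsHermitian := by
  have hreal : ∀ x y, star (A x y) = A x y := fun x y => by
    rcases hA.1 x y with h | h <;> simp [h]
  ext x y
  simp only [conjTranspose_apply, Matrix.smul_apply, Matrix.sub_apply, transpose_apply,
    smul_eq_mul, star_mul', star_sub, hreal, Complex.star_def, Complex.conj_I]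
  ring

theorem seidel_ne_zero (hA : IsTournament A) [Nontrivial V] : Complex.I • (A - Aᵀ) ≠ 0 := by
  obtain ⟨x, y, hxy⟩ := exists_pair_ne V
  intro h
  have h := congrFun (congrFun h x) y
  simp only [Matrix.smul_apply, Matrix.sub_apply, transpose_apply, smul_eq_mul,
    Matrix.zero_apply, mul_eq_zero, Complex.I_ne_zero, false_or, sub_eq_zero] at h
  rcases hA.apply_eq_one_or hxy with ⟨h1, h2⟩ | ⟨h1, h2⟩ <;> simp [h1, h2] at h

theorem repGram_seidel_apply (hA : IsTournament A) (α : ℂ) (x y : V) :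
    repGram (Complex.I • (A - Aᵀ)) α x y =
      if x = y then 1 else if A x y = 1 then α else starRingEnd ℂ α := by
  simp only [repGram, Matrix.add_apply, Matrix.smul_apply, one_apply, of_apply, Matrix.sub_apply,
    transpose_apply, smul_eq_mul]
  by_cases hxy : x = y
  · subst hxy
    simp
  · rcases hA.apply_eq_one_or hxy with ⟨h1, h2⟩ | ⟨h1, h2⟩
    · simp only [hxy, h1, h2, if_false, if_true]
      apply Complex.ext <;> simp
    · simp only [hxy, h1, h2, if_false, zero_ne_one]
      apply Complex.ext <;> simp

end IsTournament

end Tournament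

section Representation

variable {n : ℕ} {A : Matrix (Fin n) (Fin n) ℂ}

theorem IsTournament.isRepresentation_iff (hA : IsTournament A) {d : ℕ} {α : ℂ}
    {φ : Fin n → EuclideanSpace ℂ (Fin d)} :
    IsRepresentation A α φ ↔ 0 < α.im ∧ gram ℂ φ = repGram (Complex.I • (A - Aᵀ)) α := by
  refine and_congr_right fun _ => ?_
  simp only [← Matrix.ext_iff, gram_apply, hA.repGram_seidel_apply]
  constructor
  · rintro ⟨hnorm, hinner⟩ x y
    split_ifs with hxy hxy'
    · subst hxy
      simp [hnorm]
    · exact (hinner x y hxy).1 hxy'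
    · rcases hA.apply_eq_one_or hxy with ⟨h1, _⟩ | ⟨_, h2⟩
      · exact absurd h1 hxy'
      · exact (hinner x y hxy).2 h2
  · intro h
    refine ⟨fun x => ?_, fun x y hxy => ⟨fun h1 => ?_, fun h2 => ?_⟩⟩
    · have hx := h x x
      rw [if_pos rfl, inner_self_eq_norm_sq_to_K] at hx
      exact (pow_eq_one_iff_of_nonneg (norm_nonneg _) two_ne_zero).mp
        (Complex.ofReal_eq_one.mp ((RCLike.ofReal_pow _ _).trans hx))
    · simpa [hxy, h1] using h x y
    · have h1 : A x y ≠ 1 := by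
        rcases hA.apply_eq_one_or hxy with ⟨_, h⟩ | ⟨h, _⟩ <;> simp_all
      simpa [hxy, h1] using h x y

theorem IsTournament.exists_representation (hA : IsTournament A) {τ : ℝ} (hτ : τ < 0)
    (hle : ∀ i, τ ≤ hA.isHermitian_seidel.eigenvalues i) :
    ∃ φ : Fin n → EuclideanSpace ℂ (Fin (n - Module.finrank ℂ (eigSp (Complex.I • (A - Aᵀ)) τ))),
      IsRepresentation A (-Complex.I / τ) φ := by
  obtain ⟨φ, hφ⟩ := hA.isHermitian_seidel.exists_gram_eq_repGram hτ hle (by rw [Fintype.card_fin])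
  refine ⟨φ, hA.isRepresentation_iff.mpr ⟨?_, hφ⟩⟩
  simpa [Complex.div_ofReal_im] using div_pos_of_neg_of_neg neg_one_lt_zero hτ

theorem IsTournament.sub_finrank_eigSp_le_of_representable (hA : IsTournament A) {τ : ℝ}
    (hbelow : ∀ μ < τ, eigSp (Complex.I • (A - Aᵀ)) μ = ⊥)
    (hmain : mainAngle (Complex.I • (A - Aᵀ)) τ ≠ 0)
    (hm : 1 < Module.finrank ℂ (eigSp (Complex.I • (A - Aᵀ)) τ)) {d : ℕ}
    (hd : Representable A d) :
    n - Module.finrank ℂ (eigSp (Complex.I • (A - Aᵀ)) τ) ≤ d := by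
  obtain ⟨α, φ, hφ⟩ := hd
  obtain ⟨hα, hgram⟩ := hA.isRepresentation_iff.mp hφ
  have hker := finrank_ker_repGram_le hbelow (not_le_orthogonal_allOnes_of_mainAngle_ne_zero hmain)
    hm (hgram ▸ posSemidef_gram ℂ φ) hα
  have hrank := rank_add_finrank_ker_toEuclideanLin (repGram (Complex.I • (A - Aᵀ)) α)
  have hle := hgram ▸ rank_gram_le φ
  rw [Fintype.card_fin] at hrank
  omega

end Representation

/-- tournament of Type (2): if the smallest eigenvalue `τ₁` of the Seidel
matrix is main (`β₁ ≠ 0`) and has multiplicity `m₁ > 1`, then `Rep(G) = n − m₁`,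
realized with angle `α = −i/τ₁`. -/
theorem repDim_type_two {n s : ℕ} (hn : 2 ≤ n)
    (A : Matrix (Fin n) (Fin n) ℂ) (hA : IsTournament A)
    (S : Matrix (Fin n) (Fin n) ℂ) (hS : S = Complex.I • (A - Aᵀ))
    (hs : 0 < s) (τ : Fin s → ℝ) (hτ : StrictMono τ)
    (heig : ∀ μ : ℝ, eigSp S μ ≠ ⊥ ↔ ∃ i, τ i = μ)
    (hβ1 : mainAngle S (τ ⟨0, hs⟩) ≠ 0)
    (hm1 : 1 < eigMult S (τ ⟨0, hs⟩)) :
    RepDim A = n - eigMult S (τ ⟨0, hs⟩) ∧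
      ∃ φ : Fin n → EuclideanSpace ℂ (Fin (n - eigMult S (τ ⟨0, hs⟩))),
        IsRepresentation A (-Complex.I / ((τ ⟨0, hs⟩ : ℝ) : ℂ)) φ := by
  subst hS
  have hτ₀_le : ∀ k, τ ⟨0, hs⟩ ≤ τ k := fun k => hτ.monotone (Nat.zero_le k.val)
  have hle : ∀ i, τ ⟨0, hs⟩ ≤ hA.isHermitian_seidel.eigenvalues i := fun i => by
    obtain ⟨k, hk⟩ := (heig _).mp (hA.isHermitian_seidel.eigSp_eigenvalues_ne_bot i)
    exact hk ▸ hτ₀_le k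
  have hbelow : ∀ μ < τ ⟨0, hs⟩, eigSp (Complex.I • (A - Aᵀ)) μ = ⊥ := fun μ hμ => by
    by_contra h
    obtain ⟨k, rfl⟩ := (heig μ).mp h
    exact (hτ₀_le k).not_gt hμ
  have hneg : τ ⟨0, hs⟩ < 0 := by
    have := Fin.nontrivial_iff_two_le.mpr hn
    obtain ⟨i, hi⟩ := hA.isHermitian_seidel.exists_eigenvalues_neg (trace_seidel A)
      hA.seidel_ne_zero
    exact (hle i).trans_lt hi
  obtain ⟨φ, hφ⟩ := hA.exists_representation hneg hle
  refine ⟨le_antisymm (Nat.sInf_le ⟨_, φ, hφ⟩) (le_csInf ⟨_, _, φ, hφ⟩ fun d hd => ?_), φ, hφ⟩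
  exact hA.sub_finrank_eigSp_le_of_representable hbelow hβ1 hm1 hd
end

section
/- Let d be an odd positive integer and let X be a complex spherical 2-code in Ω(d). Then |X| ≤ 2d + 1. -/
open Matrix
open scoped Classical

/-!
The Gram matrix `G` of the code has rank at most `d`. Off the diagonal its entries are `α` or
`conj α`, so `G + Gᵀ = (2 - 2 Re α) I + 2 Re α J`. Since `|Re α| < |α| ≤ 1`, the
coefficient of `I` is nonzero, and as `J` has rank one, `|X| = rank ((2 - 2 Re α) I)` is at most
`rank (G + Gᵀ) + 1 ≤ 2 rank G + 1 ≤ 2d + 1`.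
-/

namespace Matrix

theorem rank_add_le {m n K : Type*} [Fintype n] [Field K] (A B : Matrix m n K) :
    (A + B).rank ≤ A.rank + B.rank := by
  unfold rank
  rw [mulVecLin_add]
  have hrange : LinearMap.range (A.mulVecLin + B.mulVecLin) ≤
      LinearMap.range A.mulVecLin ⊔ LinearMap.range B.mulVecLin := by
    rintro _ ⟨v, rfl⟩
    exact Submodule.add_mem_sup ⟨v, rfl⟩ ⟨v, rfl⟩
  exact (Submodule.finrank_mono hrange).trans (Submodule.finrank_add_le_finrank_add_finrank _ _)

theorem rank_gram_le {n 𝕜 E : Type*} [Fintype n] [RCLike 𝕜] [NormedAddCommGroup E]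
    [InnerProductSpace 𝕜 E] [FiniteDimensional 𝕜 E] (v : n → E) :
    (gram 𝕜 v).rank ≤ Module.finrank 𝕜 E := by
  rw [gram_eq_conjTranspose_mul (stdOrthonormalBasis 𝕜 E)]
  exact (rank_mul_le_right _ _).trans ((rank_le_card_height _).trans_eq (Fintype.card_fin _))

theorem card_le_rank_smul_one_add_smul_of_ne_zero {n K : Type*} [Fintype n] [DecidableEq n]
    [Field K] {c : K} (hc : c ≠ 0) (b : K) :
    Fintype.card n ≤ (c • (1 : Matrix n n K) + b • of fun _ _ => 1).rank + 1 := by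
  set J : Matrix n n K := of fun _ _ => 1
  have hJ : (-b) • J = vecMulVec (fun _ => -b) (fun _ => 1) := by
    ext; simp [J, vecMulVec]
  calc Fintype.card n = (c • (1 : Matrix n n K)).rank := by
        rw [rank_smul_of_mem_nonZeroDivisors _ (mem_nonZeroDivisors_of_ne_zero hc), rank_one]
    _ = (c • 1 + b • J + (-b) • J).rank := by rw [neg_smul, add_neg_cancel_right]
    _ ≤ (c • 1 + b • J).rank + 1 := by grw [rank_add_le, hJ, rank_vecMulVec_le]

end Matrix

namespace IsTwoCode

variable {d : ℕ} {X : Finset (EuclideanSpace ℂ (Fin d))} {α : ℂ}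

theorem inner_eq_or_eq_conj (hX : IsTwoCode X α) {x y : EuclideanSpace ℂ (Fin d)}
    (hx : x ∈ X) (hy : y ∈ X) (hxy : x ≠ y) :
    inner ℂ x y = α ∨ inner ℂ x y = starRingEnd ℂ α := by
  have h : inner ℂ x y ∈ ({α, starRingEnd ℂ α} : Set ℂ) :=
    hX.2.2 ▸ ⟨x, hx, y, hy, hxy, rfl⟩
  simpa using h

theorem re_lt_one (hX : IsTwoCode X α) : α.re < 1 := by
  obtain ⟨x, hx, y, hy, -, hα⟩ :
      α ∈ {z : ℂ | ∃ x ∈ X, ∃ y ∈ X, x ≠ y ∧ inner ℂ x y = z} :=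
    hX.2.2 ▸ Set.mem_insert α _
  calc α.re ≤ |α.re| := le_abs_self _
    _ < ‖α‖ := Complex.abs_re_lt_norm.mpr hX.1
    _ ≤ ‖x‖ * ‖y‖ := by rw [← hα]; exact norm_inner_le_norm x y
    _ = 1 := by rw [hX.2.1 x hx, hX.2.1 y hy, one_mul]

theorem gram_add_transpose (hX : IsTwoCode X α) :
    gram ℂ ((↑) : X → EuclideanSpace ℂ (Fin d)) +
        (gram ℂ ((↑) : X → EuclideanSpace ℂ (Fin d)))ᵀ =
      (2 - 2 * α.re : ℂ) • 1 + (2 * α.re : ℂ) • of fun _ _ => 1 := by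
  ext x y
  rw [Matrix.add_apply, transpose_apply, gram_apply, gram_apply,
    ← inner_conj_symm (y : EuclideanSpace ℂ (Fin d)) x, Complex.add_conj]
  by_cases hxy : x = y
  · subst hxy
    simp [hX.2.1 x x.2]
  · have hxy' : (x : EuclideanSpace ℂ (Fin d)) ≠ y := fun h => hxy (Subtype.ext h)
    obtain h | h := hX.inner_eq_or_eq_conj x.2 y.2 hxy' <;> simp [h, hxy]

end IsTwoCode

theorem twoCode_card_le_odd_general {d : ℕ}
    (X : Finset (EuclideanSpace ℂ (Fin d))) (α : ℂ) (hX : IsTwoCode X α) :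
    X.card ≤ 2 * d + 1 := by
  set G := gram ℂ ((↑) : X → EuclideanSpace ℂ (Fin d))
  have hG : G.rank ≤ d := by
    simpa using rank_gram_le (𝕜 := ℂ) ((↑) : X → EuclideanSpace ℂ (Fin d))
  have hc : (2 - 2 * α.re : ℂ) ≠ 0 := by
    have := hX.re_lt_one
    norm_cast; linarith
  calc X.card = Fintype.card X := (Fintype.card_coe X).symm
    _ ≤ (G + Gᵀ).rank + 1 :=
        hX.gram_add_transpose ▸ card_le_rank_smul_one_add_smul_of_ne_zero hc _
    _ ≤ G.rank + Gᵀ.rank + 1 := by grw [rank_add_le]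
    _ ≤ 2 * d + 1 := by rw [rank_transpose]; omega

/-- a complex spherical 2-code in `Ω(d)`, `d` odd, has at most `2d + 1` points. -/
theorem twoCode_card_le_odd {d : ℕ} (hd : 0 < d) (hodd : Odd d)
    (X : Finset (EuclideanSpace ℂ (Fin d))) (α : ℂ) (hX : IsTwoCode X α) :
    X.card ≤ 2 * d + 1 :=
  twoCode_card_le_odd_general X α hX
end

section
/- Let d be a positive integer and let A be the adjacency matrix of a tournament on n = 2d vertices whose Seidel matrix S = i(A − Aᵀ) has exactly the two eigenvalues −θ and θ, each with multiplicity d, for some θ > 0, where the smallest eigenvalue −θ is a main eigenvalue and has multiplicity d > 1. Then d is even and I + A − Aᵀ is a skew Hadamard matrix of order 2d. -/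
open Matrix
open scoped Classical

/-!
Two eigenvalues `±θ` whose eigenspaces together fill the space force `S² = θ² I`. For
`S = i M` with `M = A − Aᵀ` skew-symmetric and `±1` off the diagonal this says `M Mᵀ = θ² I`;
the diagonal entries give `θ² = n − 1`, so `I + M` is a skew Hadamard matrix. As for any
Hadamard matrix of order `n ≥ 3`, summing `(h_a + h_b)(h_a + h_c)` entrywise over three rows
gives `n` on one hand and a multiple of `4` on the other, since each term is `0` or `4`.
-/

section

variable {V : Type*} [Fintype V] [DecidableEq V]

theorem mem_eigSp_iff {H : Matrix V V ℂ} {μ : ℝ} {v : EuclideanSpace ℂ V} :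
    v ∈ eigSp H μ ↔ toEuclideanCLM (𝕜 := ℂ) H v = (μ : ℂ) • v := by
  simp [eigSp, sub_eq_zero, ← coe_toEuclideanCLM_eq_toEuclideanLin]

theorem mul_eq_zero_of_eigMult_add_eigMult (H : Matrix V V ℂ) {μ ν : ℝ} (hμν : μ ≠ ν)
    (hsum : eigMult H μ + eigMult H ν = Fintype.card V) :
    (H - (μ : ℂ) • 1) * (H - (ν : ℂ) • 1) = 0 := by
  have hdisj : Disjoint (eigSp H μ) (eigSp H ν) := by
    refine Submodule.disjoint_def.mpr fun v hμ hν => ?_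
    rw [mem_eigSp_iff] at hμ hν
    have : ((μ : ℂ) - ν) • v = 0 := by rw [sub_smul, ← hμ, ← hν, sub_self]
    exact (smul_eq_zero.mp this).resolve_left
      (sub_ne_zero.mpr (Complex.ofReal_injective.ne hμν))
  have htop : eigSp H μ ⊔ eigSp H ν = ⊤ :=
    Submodule.eq_top_of_disjoint _ _ (by rw [finrank_euclideanSpace]; exact hsum.ge) hdisj
  have hP : toEuclideanCLM (𝕜 := ℂ) ((H - (μ : ℂ) • 1) * (H - (ν : ℂ) • 1)) =
      (toEuclideanCLM (𝕜 := ℂ) H - (μ : ℂ) • 1) *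
        (toEuclideanCLM (𝕜 := ℂ) H - (ν : ℂ) • 1) := by
    rw [map_mul, map_sub, map_sub, map_smul, map_smul, map_one]
  refine (map_eq_zero_iff (toEuclideanCLM (𝕜 := ℂ)) (EquivLike.injective _)).mp ?_
  rw [hP]
  ext1 v
  have hv : v ∈ eigSp H μ ⊔ eigSp H ν := htop ▸ Submodule.mem_top
  obtain ⟨x, hx, y, hy, rfl⟩ := Submodule.mem_sup.mp hv
  rw [mem_eigSp_iff] at hx hy
  simp [hx, hy, smul_sub, smul_smul, mul_comm]

theorem sum_mul_eq_of_mul_transpose_eq {H : Matrix V V ℂ} {c : ℂ} (hH : H * Hᵀ = c • 1)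
    (x y : V) :
    ∑ j, H x j * H y j = if x = y then c else 0 := by
  simpa [Matrix.mul_apply, Matrix.one_apply] using congrFun (congrFun hH x) y

theorem four_dvd_card_of_mul_transpose_eq {H : Matrix V V ℂ}
    (hent : ∀ i j, H i j = 1 ∨ H i j = -1)
    (hH : H * Hᵀ = (Fintype.card V : ℂ) • 1) (hcard : 2 < Fintype.card V) :
    4 ∣ Fintype.card V := by
  obtain ⟨a, b, c, hab, hac, hbc⟩ := Fintype.two_lt_card_iff.mp hcard
  set f : V → ℂ := fun j => (H a j + H b j) * (H a j + H c j)
  have hsum : ∑ j, f j = Fintype.card V := by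
    simp only [f, add_mul, mul_add, Finset.sum_add_distrib, sum_mul_eq_of_mul_transpose_eq hH,
      if_true, if_neg hac, if_neg hab.symm, if_neg hbc]
    ring
  have hval : ∀ j, f j = if f j = 4 then 4 else 0 := by
    intro j
    rcases hent a j with h1 | h1 <;> rcases hent b j with h2 | h2 <;>
      rcases hent c j with h3 | h3 <;> norm_num [f, h1, h2, h3]
  rw [Finset.sum_congr rfl fun j _ => hval j, Finset.sum_ite, Finset.sum_const_zero,
    Finset.sum_const, nsmul_eq_mul, add_zero] at hsum
  exact ⟨_, by rw [mul_comm]; exact_mod_cast hsum.symm⟩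

theorem IsTournament.sub_transpose_apply_of_ne {A : Matrix V V ℂ} (hA : IsTournament A)
    {i j : V} (hij : i ≠ j) :
    (A - Aᵀ) i j = 1 ∨ (A - Aᵀ) i j = -1 := by
  have h := congrFun (congrFun hA.2 i) j
  simp only [Matrix.add_apply, transpose_apply, of_apply, Matrix.sub_apply, one_apply_ne hij,
    sub_zero] at h
  rw [Matrix.sub_apply, transpose_apply, eq_sub_of_add_eq' h]
  rcases hA.1 i j with h1 | h1 <;> norm_num [h1]

theorem isSkewHadamard_one_add {M : Matrix V V ℂ} (hdiag : ∀ i, M i i = 0)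
    (hoff : ∀ i j, i ≠ j → M i j = 1 ∨ M i j = -1)
    (hskew : Mᵀ = -M) {c : ℂ} (hMM : M * Mᵀ = c • 1) : IsSkewHadamard (1 + M) := by
  have hc : ∀ i : V, c = Fintype.card V - 1 := by
    intro i
    have hsq : ∀ j, M i j * M i j = 1 - if i = j then 1 else 0 := by
      intro j
      rcases eq_or_ne i j with rfl | hij
      · simp [hdiag]
      · rcases hoff i j hij with h | h <;> simp [h, hij]
    simpa [hsq, Finset.sum_sub_distrib] using (sum_mul_eq_of_mul_transpose_eq hMM i i).symm
  refine ⟨fun i j => ?_, ?_, ?_⟩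
  · rcases eq_or_ne i j with rfl | hij
    · simp [hdiag]
    · simpa [one_apply_ne hij] using hoff i j hij
  · rw [transpose_add, transpose_one, hskew, two_smul]
    abel
  · have : (1 + M) * (1 + M)ᵀ = 1 + c • 1 := by
      rw [transpose_add, transpose_one, add_mul, mul_add, mul_add, hMM, hskew]
      noncomm_ring
    rw [this]
    ext i j
    rcases eq_or_ne i j with rfl | hij
    · simp [hc i]
    · simp [one_apply_ne hij]

end

theorem type_two_skewHadamard_general {d : ℕ} (hd : 1 < d)
    (A : Matrix (Fin (2 * d)) (Fin (2 * d)) ℂ) (hA : IsTournament A)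
    (S : Matrix (Fin (2 * d)) (Fin (2 * d)) ℂ) (hS : S = Complex.I • (A - Aᵀ))
    (θ : ℝ) (hθ : 0 < θ)
    (hm1 : eigMult S (-θ) = d) (hm2 : eigMult S θ = d) :
    Even d ∧ IsSkewHadamard ((1 : Matrix (Fin (2 * d)) (Fin (2 * d)) ℂ) + A - Aᵀ) := by
  have hSS : S * S = ((θ : ℂ) ^ 2) • 1 := by
    have h := mul_eq_zero_of_eigMult_add_eigMult S (by linarith : -θ ≠ θ)
      (by rw [hm1, hm2, Fintype.card_fin, two_mul])
    rw [← sub_eq_zero, ← h]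
    simp only [sub_mul, mul_sub, Matrix.smul_mul, Matrix.mul_smul, one_mul, mul_one, smul_smul]
    push_cast
    module
  have hMM : (A - Aᵀ) * (A - Aᵀ)ᵀ = ((θ : ℂ) ^ 2) • 1 := by
    rw [← hSS, hS, transpose_sub, transpose_transpose, smul_mul_smul_comm, Complex.I_mul_I,
      ← neg_sub, mul_neg, neg_one_smul, neg_mul, neg_neg]
  have hH : IsSkewHadamard (1 + (A - Aᵀ)) :=
    isSkewHadamard_one_add (fun i => by simp) (fun i j => hA.sub_transpose_apply_of_ne)
      (by simp) hMM
  have h4 := four_dvd_card_of_mul_transpose_eq hH.1 hH.2.2 (by rw [Fintype.card_fin]; omega)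
  rw [Fintype.card_fin] at h4
  exact ⟨Nat.even_iff.mpr (by omega), add_sub_assoc 1 A Aᵀ ▸ hH⟩

/-- a tournament on `n = 2d` vertices whose Seidel matrix has exactly the
two eigenvalues `−θ, θ` (`θ > 0`), each of multiplicity `d`, with `−θ` a main eigenvalue
and `d > 1`, forces `d` even and `I + A − Aᵀ` a skew Hadamard matrix of order `2d`. -/
theorem type_two_skewHadamard {d : ℕ} (hd : 1 < d)
    (A : Matrix (Fin (2 * d)) (Fin (2 * d)) ℂ) (hA : IsTournament A)
    (S : Matrix (Fin (2 * d)) (Fin (2 * d)) ℂ) (hS : S = Complex.I • (A - Aᵀ))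
    (θ : ℝ) (hθ : 0 < θ)
    (heig : ∀ μ : ℝ, eigSp S μ ≠ ⊥ ↔ (μ = -θ ∨ μ = θ))
    (hm1 : eigMult S (-θ) = d) (hm2 : eigMult S θ = d)
    (hβ1 : mainAngle S (-θ) ≠ 0) :
    Even d ∧ IsSkewHadamard ((1 : Matrix (Fin (2 * d)) (Fin (2 * d)) ℂ) + A - Aᵀ) :=
  type_two_skewHadamard_general hd A hA S hS θ hθ hm1 hm2
end

section
/- Let A_1 and A_2 be adjacency matrices of doubly regular tournaments on d vertices, and let A be the 2d×2d block matrix with blocks A_1 and A_2 on the diagonal, the all-ones matrix J in the upper-right block, and the zero matrix in the lower-left block. Then A is the adjacency matrix of a tournament on 2d vertices whose Seidel matrix S = i(A − Aᵀ) satisfies: S² equals the 2×2 block-diagonal matrix with both diagonal blocks equal to dI + (d−1)J of size d. -/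
open Matrix
open scoped Classical

/-! For a doubly regular tournament on `n` vertices, the skew part `K = A - Aᵀ` satisfies
`K J = J K = 0` (all row and column sums of `A` equal `(n - 1)/2`) and `K² = J - n I` (from the
formula for `A Aᵀ` and `Aᵀ = J - I - A`). The glued tournament has skew part
`[[K₁, J], [-J, K₂]]`; squaring blockwise, the off-diagonal blocks vanish and the diagonal ones are
`K² - J² = -(d I + (d - 1) J)`, whose sign is flipped by `i² = -1`. -/

local notation "J" => Matrix.of fun _ _ => (1 : ℂ)

section AllOnes

variable {U V W X : Type*}

theorem allOnes_mul_allOnes [Fintype V] :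
    (J : Matrix U V ℂ) * (J : Matrix V W ℂ) = (Fintype.card V : ℂ) • J := by
  ext i j
  simp [Matrix.mul_apply]

theorem allOnes_transpose : (J : Matrix V W ℂ)ᵀ = J := rfl

theorem allOnes_eq_fromBlocks :
    (J : Matrix (U ⊕ V) (W ⊕ X) ℂ) = fromBlocks J J J J := by
  ext (i | i) (j | j) <;> rfl

theorem fromBlocks_allOnes_sub_transpose (A₁ : Matrix V V ℂ) (A₂ : Matrix W W ℂ) :
    fromBlocks A₁ J 0 A₂ - (fromBlocks A₁ J 0 A₂)ᵀ = fromBlocks (A₁ - A₁ᵀ) J (-J) (A₂ - A₂ᵀ) := by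
  ext (i | i) (j | j) <;> simp

end AllOnes

namespace IsTournament

variable {V W : Type*} [Fintype V] [DecidableEq V] [Fintype W] [DecidableEq W]

theorem transpose_eq {A : Matrix V V ℂ} (h : IsTournament A) : Aᵀ = J - 1 - A := by
  rw [← h.2]
  abel

theorem fromBlocks_allOnes {A₁ : Matrix V V ℂ} {A₂ : Matrix W W ℂ}
    (h₁ : IsTournament A₁) (h₂ : IsTournament A₂) : IsTournament (fromBlocks A₁ J 0 A₂) := by
  refine ⟨?_, ?_⟩
  · rintro (i | i) (j | j) <;> simp [h₁.1, h₂.1]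
  · rw [fromBlocks_transpose, fromBlocks_add, h₁.2, h₂.2, allOnes_eq_fromBlocks]
    ext (i | i) (j | j) <;> simp [Matrix.one_apply]

end IsTournament

namespace IsDoublyRegular

variable {V : Type*} [Fintype V] [DecidableEq V] {A : Matrix V V ℂ}

theorem mul_allOnes (h : IsDoublyRegular A) :
    A * J = (((Fintype.card V : ℂ) - 1) / 2) • J := by
  ext i j
  simpa [Matrix.mul_apply, Matrix.mulVec, dotProduct] using congrFun h.2.1 i

theorem transpose_mul_allOnes (h : IsDoublyRegular A) :
    Aᵀ * J = (((Fintype.card V : ℂ) - 1) / 2) • J := by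
  rw [h.1.transpose_eq, Matrix.sub_mul, Matrix.sub_mul, allOnes_mul_allOnes, Matrix.one_mul,
    h.mul_allOnes]
  module

theorem allOnes_mul (h : IsDoublyRegular A) :
    J * A = (((Fintype.card V : ℂ) - 1) / 2) • J := by
  have := congrArg transpose h.transpose_mul_allOnes
  rwa [Matrix.transpose_mul, Matrix.transpose_transpose, Matrix.transpose_smul,
    allOnes_transpose] at this

theorem allOnes_mul_transpose (h : IsDoublyRegular A) :
    J * Aᵀ = (((Fintype.card V : ℂ) - 1) / 2) • J := by
  have := congrArg transpose h.mul_allOnes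
  rwa [Matrix.transpose_mul, Matrix.transpose_smul, allOnes_transpose] at this

theorem skew_mul_allOnes (h : IsDoublyRegular A) :
    (A - Aᵀ) * J = 0 := by
  rw [Matrix.sub_mul, h.mul_allOnes, h.transpose_mul_allOnes, sub_self]

theorem allOnes_mul_skew (h : IsDoublyRegular A) :
    J * (A - Aᵀ) = 0 := by
  rw [Matrix.mul_sub, h.allOnes_mul, h.allOnes_mul_transpose, sub_self]

theorem mul_self (h : IsDoublyRegular A) :
    A * A = (((Fintype.card V : ℂ) - 1) / 2) • J - A -
    ((((Fintype.card V : ℂ) + 1) / 4) • 1 + (((Fintype.card V : ℂ) - 3) / 4) • J) := by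
  have h₂ := h.2.2
  rw [h.1.transpose_eq, Matrix.mul_sub, Matrix.mul_sub, Matrix.mul_one, h.mul_allOnes] at h₂
  rw [← h₂]
  abel

theorem skew_mul_skew (h : IsDoublyRegular A) :
    (A - Aᵀ) * (A - Aᵀ) = J - (Fintype.card V : ℂ) • 1 := by
  rw [h.1.transpose_eq]
  simp only [Matrix.sub_mul, Matrix.mul_sub, Matrix.one_mul, Matrix.mul_one, h.mul_self,
    h.mul_allOnes, h.allOnes_mul, allOnes_mul_allOnes]
  module

end IsDoublyRegular

/-- gluing two doubly regular tournaments `A₁, A₂` on `d` vertices as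
`fromBlocks A₁ J 0 A₂` gives a tournament on `2d` vertices whose Seidel matrix `S`
satisfies `S² = diag(dI + (d−1)J, dI + (d−1)J)`. -/
theorem doublyRegular_glue_seidel_square {d : ℕ}
    (A₁ A₂ : Matrix (Fin d) (Fin d) ℂ)
    (h₁ : IsDoublyRegular A₁) (h₂ : IsDoublyRegular A₂)
    (A : Matrix (Fin d ⊕ Fin d) (Fin d ⊕ Fin d) ℂ)
    (hA : A = Matrix.fromBlocks A₁ (Matrix.of (fun _ _ => (1 : ℂ))) 0 A₂) :
    IsTournament A ∧
    (Complex.I • (A - Aᵀ)) ^ 2 = Matrix.fromBlocks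
      ((d : ℂ) • 1 + ((d : ℂ) - 1) • Matrix.of (fun _ _ => (1 : ℂ))) 0 0
      ((d : ℂ) • 1 + ((d : ℂ) - 1) • Matrix.of (fun _ _ => (1 : ℂ))) := by
  subst hA
  refine ⟨h₁.1.fromBlocks_allOnes h₂.1, ?_⟩
  rw [fromBlocks_allOnes_sub_transpose, smul_pow, Complex.I_sq, sq, fromBlocks_multiply]
  simp only [Matrix.neg_mul, Matrix.mul_neg, h₁.skew_mul_skew, h₂.skew_mul_skew,
    h₁.skew_mul_allOnes, h₂.skew_mul_allOnes, h₁.allOnes_mul_skew, h₂.allOnes_mul_skew,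
    allOnes_mul_allOnes, Fintype.card_fin, neg_one_smul, fromBlocks_neg]
  congr 1 <;> module
end
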